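/- arXiv:1501.00181 — 3 statements merged into one kernel-verified Lean document; each statement's English description precedes it below -/
import Mathlib

section
/- (Approximation lemma for the double commutant theorem) Let A be a self-adjoint subalgebra of B(H) containing the identity operator, and let T₀ ∈ A''. Then for every ξ ∈ H and ε > 0 there exists S ∈ A with ‖(T₀ − S)ξ‖ < ε. -/
/-!
The closure `K` of the orbit `A ξ` is a closed subspace invariant under `A`, hence, `A` being
self-adjoint, also under the adjoints of its elements. So the orthogonal projection onto `K`
commutes with `A`, and therefore with `T₀ ∈ A''`, which makes `K` invariant under `T₀`. Since
`1 ∈ A`, `ξ ∈ K`, so `T₀ ξ` lies in the closure of `A ξ`.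
-/

open ContinuousLinearMap Module.End

section Projection

variable {𝕜 E : Type*} [RCLike 𝕜] [NormedAddCommGroup E] [InnerProductSpace 𝕜 E] [CompleteSpace E]

theorem Submodule.commute_starProjection_of_mem_invtSubmodule {K : Submodule 𝕜 E}
    [K.HasOrthogonalProjection] {T : E →L[𝕜] E} (hT : K ∈ invtSubmodule (T : E →ₗ[𝕜] E))
    (hT' : K ∈ invtSubmodule (adjoint T : E →ₗ[𝕜] E)) :
    Commute K.starProjection T := by
  rw [(isIdempotentElem_starProjection K).commute_iff, range_starProjection,
    ker_starProjection]
  exact ⟨hT, orthogonal_mem_invtSubmodule hT'⟩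

theorem Submodule.starProjection_mem_centralizer {S : Set (E →L[𝕜] E)}
    (hS : ∀ T ∈ S, adjoint T ∈ S) {K : Submodule 𝕜 E} [K.HasOrthogonalProjection]
    (hK : ∀ T ∈ S, K ∈ invtSubmodule (T : E →ₗ[𝕜] E)) :
    K.starProjection ∈ Set.centralizer S := fun T hT =>
  (K.commute_starProjection_of_mem_invtSubmodule (hK T hT) (hK _ (hS T hT))).symm.eq

theorem Submodule.mem_invtSubmodule_of_mem_centralizer_centralizer {S : Set (E →L[𝕜] E)}
    (hS : ∀ T ∈ S, adjoint T ∈ S) {K : Submodule 𝕜 E} [K.HasOrthogonalProjection]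
    (hK : ∀ T ∈ S, K ∈ invtSubmodule (T : E →ₗ[𝕜] E)) {T₀ : E →L[𝕜] E}
    (hT₀ : T₀ ∈ Set.centralizer (Set.centralizer S)) :
    K ∈ invtSubmodule (T₀ : E →ₗ[𝕜] E) := by
  have hP : Commute K.starProjection T₀ := hT₀ _ (K.starProjection_mem_centralizer hS hK)
  simpa only [range_starProjection] using
    (((isIdempotentElem_starProjection K).commute_iff).mp hP).1

end Projection

section Orbit

variable {𝕜 E : Type*} [NontriviallyNormedField 𝕜] [NormedAddCommGroup E] [NormedSpace 𝕜 E]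

theorem Subalgebra.map_apply_mem_invtSubmodule (A : Subalgebra 𝕜 (E →L[𝕜] E)) (ξ : E)
    {S : E →L[𝕜] E} (hS : S ∈ A) :
    A.toSubmodule.map (apply 𝕜 E ξ : (E →L[𝕜] E) →ₗ[𝕜] E) ∈ invtSubmodule (S : E →ₗ[𝕜] E) := by
  rw [mem_invtSubmodule_iff_forall_mem_of_mem]
  rintro _ ⟨T, hT, rfl⟩
  exact ⟨S * T, A.mul_mem hS hT, rfl⟩

theorem Subalgebra.mem_map_apply (A : Subalgebra 𝕜 (E →L[𝕜] E)) (ξ : E) :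
    ξ ∈ A.toSubmodule.map (apply 𝕜 E ξ : (E →L[𝕜] E) →ₗ[𝕜] E) :=
  ⟨1, A.one_mem, rfl⟩

end Orbit

/-- Approximation lemma for the double commutant theorem: if `A` is a self-adjoint
subalgebra of `B(H)` containing the identity and `T₀ ∈ A''`, then for every `ξ ∈ H`
and `ε > 0` there is `S ∈ A` with `‖(T₀ - S) ξ‖ < ε`. -/
theorem bicommutant_approximation {H : Type*} [NormedAddCommGroup H]
    [InnerProductSpace ℂ H] [CompleteSpace H] (A : Subalgebra ℂ (H →L[ℂ] H))
    (hA : ∀ T ∈ A, ContinuousLinearMap.adjoint T ∈ A)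
    (T₀ : H →L[ℂ] H)
    (hT₀ : T₀ ∈ Set.centralizer (Set.centralizer (A : Set (H →L[ℂ] H))))
    (ξ : H) (ε : ℝ) (hε : 0 < ε) :
    ∃ S ∈ A, ‖(T₀ - S) ξ‖ < ε := by
  set M := A.toSubmodule.map (apply ℂ H ξ : (H →L[ℂ] H) →ₗ[ℂ] H)
  have : CompleteSpace M.topologicalClosure := M.isClosed_topologicalClosure.completeSpace_coe
  have hK : ∀ S ∈ A, M.topologicalClosure ∈ invtSubmodule (S : H →ₗ[ℂ] H) := fun S hS =>
    Submodule.topologicalClosure_mem_invtSubmodule (A.map_apply_mem_invtSubmodule ξ hS)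
  have hT₀ξ : T₀ ξ ∈ closure (M : Set H) :=
    M.topologicalClosure.mem_invtSubmodule_of_mem_centralizer_centralizer hA hK hT₀
      (M.le_topologicalClosure (A.mem_map_apply ξ))
  obtain ⟨_, ⟨S, hS, rfl⟩, hdist⟩ := Metric.mem_closure_iff.mp hT₀ξ ε hε
  exact ⟨S, hS, by simpa [dist_eq_norm] using hdist⟩
end

section
/- (von Neumann double commutant theorem) Let A be a self-adjoint subalgebra of B(H) containing the identity operator. Then A is dense in A'' in the strong operator topology. -/
open Topology

/-- The strong operator topology on `B(H)`: the topology induced by the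
maps `T ↦ T ξ` for `ξ ∈ H` (equivalently, by the seminorms `T ↦ ‖T ξ‖`). -/
noncomputable def sot (H : Type*) [NormedAddCommGroup H] [InnerProductSpace ℂ H] :
    TopologicalSpace (H →L[ℂ] H) :=
  ⨅ ξ : H, TopologicalSpace.induced (fun T : H →L[ℂ] H => T ξ) inferInstance

/-!
Fix `T ∈ A''` and `x ∈ H`. The closed subspace `K = closure (A x)` is invariant under `A`, and so
is `Kᗮ` because `A` is closed under adjoints; hence the orthogonal projection onto `K` lies in `A'`
and commutes with `T`, and `T x ∈ K` since `x ∈ K`.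
For finitely many vectors `ξ₁, …, ξₙ` apply this to the amplification `S ↦ S ⊕ ⋯ ⊕ S` of `A` on
`Hⁿ` and the vector `(ξ₁, …, ξₙ)`: an operator on `Hⁿ` commutes with every amplified `S ∈ A` iff
its matrix entries lie in `A'`, so the amplification of `T` lies in the double commutant of the
amplified algebra. A strong neighbourhood of `T` is determined by finitely many vectors.
-/

open Set ContinuousLinearMap

theorem mem_closure_iff_forall_finset_restrict {ι : Type*} {Y : ι → Type*}
    [∀ i, TopologicalSpace (Y i)] {f : ∀ i, Y i} {s : Set (∀ i, Y i)} :
    f ∈ closure s ↔ ∀ I : Finset ι, I.restrict f ∈ closure (I.restrict '' s) := by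
  refine ⟨fun hf I => map_mem_closure (Finset.continuous_restrict I) hf (mapsTo_image _ s),
    fun hf => mem_closure_iff_nhds.mpr fun U hU => ?_⟩
  rw [nhds_pi, Filter.mem_pi'] at hU
  obtain ⟨I, t, ht, hIU⟩ := hU
  have hbox : univ.pi (fun i : I => t i) ∈ 𝓝 (I.restrict f) :=
    set_pi_mem_nhds finite_univ fun i _ => ht i
  obtain ⟨_, hg, g, hgs, rfl⟩ := mem_closure_iff_nhds.mp (hf I) _ hbox
  exact ⟨g, hIU fun i hi => hg ⟨i, hi⟩ (mem_univ _), hgs⟩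

theorem sot_eq_induced (H : Type*) [NormedAddCommGroup H] [InnerProductSpace ℂ H] :
    sot H = TopologicalSpace.induced (fun T : H →L[ℂ] H => ⇑T) inferInstance := by
  simp only [sot, Pi.topologicalSpace, induced_iInf, induced_compose]
  rfl

theorem apply_mem_closure_of_mem_centralizer_centralizer {F : Type*} [NormedAddCommGroup F]
    [InnerProductSpace ℂ F] [CompleteSpace F] (B : Subalgebra ℂ (F →L[ℂ] F))
    (hB : ∀ S ∈ B, adjoint S ∈ B) {T : F →L[ℂ] F}
    (hT : T ∈ centralizer (centralizer (B : Set (F →L[ℂ] F)))) (x : F) :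
    T x ∈ closure ((fun S : F →L[ℂ] F => S x) '' B) := by
  set K := ((Subalgebra.toSubmodule B).map (apply ℂ F x).toLinearMap).topologicalClosure
  have hK : (K : Set F) = closure ((fun S : F →L[ℂ] F => S x) '' B) := by
    rw [Submodule.topologicalClosure_coe, Submodule.map_coe]; rfl
  have hKinv : ∀ S ∈ B, K ∈ Module.End.invtSubmodule S.toLinearMap := by
    intro S hS
    rw [Module.End.mem_invtSubmodule, ← SetLike.coe_subset_coe, Submodule.comap_coe, hK]
    refine (closure_subset_preimage_closure_image S.continuous).trans <|
      preimage_mono <| closure_mono ?_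
    rintro _ ⟨_, ⟨S', hS', rfl⟩, rfl⟩
    exact ⟨S * S', B.mul_mem hS hS', rfl⟩
  have hP : K.starProjection ∈ centralizer (B : Set (F →L[ℂ] F)) := by
    intro S hS
    refine ((K.isIdempotentElem_starProjection.commute_iff (T := S)).mpr ⟨?_, ?_⟩).symm
    · rw [K.range_starProjection]; exact hKinv S hS
    · rw [K.ker_starProjection]; exact orthogonal_mem_invtSubmodule (hKinv _ (hB S hS))
  have hxK : K.starProjection x = x :=
    Submodule.starProjection_eq_self_iff.mpr <| subset_closure ⟨1, B.one_mem, rfl⟩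
  rw [← hK, ← hxK, ← mul_apply_eq_comp, ← hT _ hP, mul_apply_eq_comp]
  exact K.starProjection_apply_mem _

section Amplification

variable {H : Type*} [NormedAddCommGroup H] [InnerProductSpace ℂ H] {ι : Type*}

local notation "E" => PiLp 2 (fun _ : ι => H)

noncomputable def entry [DecidableEq ι] (R : E →L[ℂ] E) (i j : ι) : H →L[ℂ] H :=
  PiLp.proj 2 _ i ∘L R ∘L (PiLp.continuousLinearEquiv 2 ℂ _).symm.toContinuousLinearMap ∘L
    single ℂ (fun _ : ι => H) j

theorem entry_apply [DecidableEq ι] (R : E →L[ℂ] E) (i j : ι) (y : H) :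
    entry R i j y = R (PiLp.single 2 j y) i := rfl

variable [Fintype ι]

variable (ι) in
noncomputable def amplification : (H →L[ℂ] H) →ₐ[ℂ] (E →L[ℂ] E) where
  toFun S := (PiLp.continuousLinearEquiv 2 ℂ _).symm.toContinuousLinearMap ∘L
    piMap (fun _ => S) ∘L (PiLp.continuousLinearEquiv 2 ℂ _).toContinuousLinearMap
  map_one' := rfl
  map_mul' _ _ := rfl
  map_zero' := rfl
  map_add' _ _ := rfl
  commutes' _ := rfl

@[simp]
theorem amplification_apply (S : H →L[ℂ] H) (x : E) (i : ι) :
    amplification ι S x i = S (x i) := rfl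

theorem adjoint_amplification [CompleteSpace H] (S : H →L[ℂ] H) :
    adjoint (amplification ι S) = amplification ι (adjoint S) := by
  refine ((eq_adjoint_iff _ _).mpr fun x y => ?_).symm
  simp only [PiLp.inner_apply, amplification_apply, adjoint_inner_left]

section Entries

variable [DecidableEq ι]

theorem ext_entry {X Y : E →L[ℂ] E} (h : ∀ i j, entry X i j = entry Y i j) : X = Y := by
  ext x i
  have hi := LinearMap.pi_ext
    (f := (PiLp.proj 2 _ i ∘L X ∘L (PiLp.continuousLinearEquiv 2 ℂ _).symm.toContinuousLinearMap :
      (ι → H) →ₗ[ℂ] H))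
    (g := (PiLp.proj 2 _ i ∘L Y ∘L (PiLp.continuousLinearEquiv 2 ℂ _).symm.toContinuousLinearMap :
      (ι → H) →ₗ[ℂ] H)) fun j y => congr($(h i j) y)
  exact congr($hi (WithLp.ofLp x))

theorem amplification_single (S : H →L[ℂ] H) (j : ι) (y : H) :
    amplification ι S (PiLp.single 2 j y) = PiLp.single 2 j (S y) := by
  ext i
  by_cases h : i = j
  · subst h; simp
  · simp [h]

theorem entry_amplification_mul (S : H →L[ℂ] H) (R : E →L[ℂ] E) (i j : ι) :
    entry (amplification ι S * R) i j = S * entry R i j := rfl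

theorem entry_mul_amplification (S : H →L[ℂ] H) (R : E →L[ℂ] E) (i j : ι) :
    entry (R * amplification ι S) i j = entry R i j * S := by
  ext y
  simp only [entry_apply, mul_apply_eq_comp, amplification_single]

theorem entry_mem_centralizer {s : Set (H →L[ℂ] H)} {R : E →L[ℂ] E}
    (hR : R ∈ centralizer (amplification ι '' s)) (i j : ι) : entry R i j ∈ centralizer s :=
  fun S hS => by
    rw [← entry_amplification_mul, hR _ (mem_image_of_mem _ hS), entry_mul_amplification]

end Entries

theorem amplification_mem_centralizer_centralizer {s : Set (H →L[ℂ] H)} {T : H →L[ℂ] H}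
    (hT : T ∈ centralizer (centralizer s)) :
    amplification ι T ∈ centralizer (centralizer (amplification ι '' s)) := by
  classical
  exact fun R hR => ext_entry fun i j => by
    rw [entry_mul_amplification, entry_amplification_mul, hT _ (entry_mem_centralizer hR i j)]

theorem pi_apply_mem_closure_of_mem_centralizer_centralizer [CompleteSpace H]
    (A : Subalgebra ℂ (H →L[ℂ] H)) (hA : ∀ S ∈ A, adjoint S ∈ A) {T : H →L[ℂ] H}
    (hT : T ∈ centralizer (centralizer (A : Set (H →L[ℂ] H)))) (ξ : ι → H) :
    (fun i => T (ξ i)) ∈ closure ((fun (S : H →L[ℂ] H) i => S (ξ i)) '' A) := by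
  have hB : ∀ R ∈ A.map (amplification ι), adjoint R ∈ A.map (amplification ι) := by
    rintro _ ⟨S, hS, rfl⟩
    exact ⟨adjoint S, hA S hS, (adjoint_amplification S).symm⟩
  have hTξ := apply_mem_closure_of_mem_centralizer_centralizer _ hB
    (by simpa using amplification_mem_centralizer_centralizer hT) (WithLp.toLp 2 ξ)
  refine map_mem_closure (PiLp.continuous_ofLp 2 _) hTξ ?_
  rintro _ ⟨_, ⟨S, hS, rfl⟩, rfl⟩
  exact ⟨S, hS, rfl⟩

end Amplification

/-- von Neumann's double commutant theorem: a self-adjoint subalgebra `A` of `B(H)`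
containing the identity is dense in its double commutant `A''` in the strong operator
topology, i.e. `A'' ⊆ closure A` for the strong operator topology. -/
theorem double_commutant_theorem {H : Type*} [NormedAddCommGroup H]
    [InnerProductSpace ℂ H] [CompleteSpace H] (A : Subalgebra ℂ (H →L[ℂ] H))
    (hA : ∀ T ∈ A, ContinuousLinearMap.adjoint T ∈ A) :
    Set.centralizer (Set.centralizer (A : Set (H →L[ℂ] H))) ⊆
      closure[sot H] (A : Set (H →L[ℂ] H)) := by
  intro T hT
  rw [sot_eq_induced, closure_induced, mem_closure_iff_forall_finset_restrict]
  intro I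
  rw [image_image]
  exact pi_apply_mem_closure_of_mem_centralizer_centralizer A hA hT ((↑) : I → H)
end

section
/- If H is an infinite-dimensional Hilbert space, then there is no state τ on B(H) (positive linear functional with τ(I) = 1) satisfying the trace property τ(xy) = τ(yx) for all x, y ∈ B(H). -/
/-!
Two isometries `u, v` with orthogonal ranges make `1 - u u* - v v*` a projection. A tracial
functional takes the value `τ(u* u) = τ 1` on each of `u u*` and `v v*`, so positivity on that
projection gives `-τ 1 ≥ 0`, while `τ 1 = τ(1* 1) ≥ 0`; hence `τ 1 = 0`. On an
infinite-dimensional Hilbert space such isometries exist: a Hilbert basis indexed by `s` can be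
reindexed by `s ⊕ s`, and `u`, `v` send it onto its two halves.
-/

open scoped ComplexOrder InnerProductSpace

section StarRing

variable {A : Type*} [Ring A] [StarRing A]

theorem isStarProjection_mul_star_of_star_mul_self {u : A} (hu : star u * u = 1) :
    IsStarProjection (u * star u) where
  isIdempotentElem := by rw [IsIdempotentElem, mul_assoc, ← mul_assoc (star u), hu, one_mul]
  isSelfAdjoint := .mul_star_self u

theorem map_one_eq_zero_of_isometries_with_orthogonal_ranges {R : Type*} [AddCommGroup R]
    [PartialOrder R] [IsOrderedAddMonoid R] (τ : A →+ R) (hpos : ∀ x, 0 ≤ τ (star x * x))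
    (htr : ∀ x y, τ (x * y) = τ (y * x)) {u v : A} (hu : star u * u = 1) (hv : star v * v = 1)
    (huv : star u * v = 0) : τ 1 = 0 := by
  have hpq : u * star u * (v * star v) = 0 := by
    rw [mul_assoc, ← mul_assoc (star u), huv, zero_mul, mul_zero]
  have hr : IsStarProjection (1 - (u * star u + v * star v)) :=
    ((isStarProjection_mul_star_of_star_mul_self hu).add
      (isStarProjection_mul_star_of_star_mul_self hv) hpq).one_sub
  have hτr := hpos (1 - (u * star u + v * star v))
  rw [hr.isSelfAdjoint.star_eq, hr.isIdempotentElem.eq, map_sub, map_add, htr u, htr v, hu, hv,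
    sub_add_cancel_left, neg_nonneg] at hτr
  exact le_antisymm hτr (by simpa using hpos 1)

end StarRing

section Hilbert

variable {𝕜 E F ι : Type*} [RCLike 𝕜] [NormedAddCommGroup E] [InnerProductSpace 𝕜 E]
  [NormedAddCommGroup F] [InnerProductSpace 𝕜 F] [CompleteSpace F]

theorem Orthonormal.inner_linearIsometry_eq_zero {f : ι → F} (hf : Orthonormal 𝕜 f) {w : F}
    (hw : ∀ i, ⟪w, f i⟫_𝕜 = 0) (a : lp (fun _ : ι ↦ 𝕜) 2) :
    ⟪w, hf.orthogonalFamily.linearIsometry a⟫_𝕜 = 0 := by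
  have h := (hf.orthogonalFamily.hasSum_linearIsometry a).mapL (innerSL 𝕜 w)
  simp only [innerSL_apply_apply, LinearIsometry.toSpanSingleton_apply,
    inner_smul_right, hw, mul_zero] at h
  exact h.unique hasSum_zero

theorem Orthonormal.inner_linearIsometry_linearIsometry_eq_zero {f g : ι → F}
    (hf : Orthonormal 𝕜 f) (hg : Orthonormal 𝕜 g) (hfg : ∀ i j, ⟪f i, g j⟫_𝕜 = 0)
    (a c : lp (fun _ : ι ↦ 𝕜) 2) :
    ⟪hf.orthogonalFamily.linearIsometry a, hg.orthogonalFamily.linearIsometry c⟫_𝕜 = 0 := by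
  refine hg.inner_linearIsometry_eq_zero (fun j ↦ ?_) c
  have hfj : ⟪g j, hf.orthogonalFamily.linearIsometry a⟫_𝕜 = 0 :=
    hf.inner_linearIsometry_eq_zero (fun i ↦ by rw [← inner_conj_symm, hfg, map_zero]) a
  rw [← inner_conj_symm, hfj, map_zero]

theorem HilbertBasis.finiteDimensional_of_finite [Finite ι] (b : HilbertBasis ι 𝕜 E) :
    FiniteDimensional 𝕜 E :=
  have := Fintype.ofFinite ι
  b.toOrthonormalBasis.toBasis.finiteDimensional_of_finite

variable [CompleteSpace E]

theorem exists_isometries_with_orthogonal_ranges (hdim : ¬ FiniteDimensional 𝕜 E) :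
    ∃ u v : E →L[𝕜] E, star u * u = 1 ∧ star v * v = 1 ∧ star u * v = 0 := by
  obtain ⟨s, b, -⟩ := exists_hilbertBasis 𝕜 E
  have : Infinite s := not_finite_iff_infinite.mp fun _ ↦ hdim b.finiteDimensional_of_finite
  obtain ⟨e⟩ : Nonempty (s ⊕ s ≃ s) := Cardinal.eq.mp <| by
    rw [Cardinal.mk_sum, Cardinal.lift_id, Cardinal.add_eq_self (Cardinal.aleph0_le_mk s)]
  have hf := b.orthonormal.comp _ (e.injective.comp Sum.inl_injective)
  have hg := b.orthonormal.comp _ (e.injective.comp Sum.inr_injective)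
  let u := (hf.orthogonalFamily.linearIsometry.comp b.repr.toLinearIsometry).toContinuousLinearMap
  let v := (hg.orthogonalFamily.linearIsometry.comp b.repr.toLinearIsometry).toContinuousLinearMap
  refine ⟨u, v, ?_, ?_, ?_⟩
  · exact (u.norm_map_iff_adjoint_comp_self).mp (LinearIsometry.norm_map _)
  · exact (v.norm_map_iff_adjoint_comp_self).mp (LinearIsometry.norm_map _)
  · refine ContinuousLinearMap.ext fun x ↦ ext_inner_right 𝕜 fun y ↦ ?_
    rw [ContinuousLinearMap.star_eq_adjoint, mul_apply_eq_comp,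
      ContinuousLinearMap.adjoint_inner_left, zero_apply, inner_zero_left]
    refine (hg.inner_linearIsometry_linearIsometry_eq_zero hf (fun i j ↦ ?_) _ _)
    exact b.orthonormal.inner_eq_zero (e.injective.ne Sum.inr_ne_inl)

end Hilbert

/-- If `H` is infinite-dimensional, there is no state on `B(H)` (positive linear functional
with `τ(I) = 1`) satisfying the trace property `τ(xy) = τ(yx)`. -/
theorem no_tracial_state_on_bounded_operators {H : Type*} [NormedAddCommGroup H]
    [InnerProductSpace ℂ H] [CompleteSpace H] (hdim : ¬ FiniteDimensional ℂ H) :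
    ¬ ∃ τ : (H →L[ℂ] H) →ₗ[ℂ] ℂ,
        (∀ x : H →L[ℂ] H, 0 ≤ τ (ContinuousLinearMap.adjoint x * x)) ∧
        τ 1 = 1 ∧
        (∀ x y : H →L[ℂ] H, τ (x * y) = τ (y * x)) := by
  rintro ⟨τ, hpos, hone, htr⟩
  obtain ⟨u, v, hu, hv, huv⟩ := exists_isometries_with_orthogonal_ranges hdim
  have hpos' : ∀ x, 0 ≤ τ.toAddMonoidHom (star x * x) := by
    simpa only [ContinuousLinearMap.star_eq_adjoint, LinearMap.toAddMonoidHom_coe] using hpos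
  have := map_one_eq_zero_of_isometries_with_orthogonal_ranges τ.toAddMonoidHom hpos' htr hu hv huv
  simp [hone] at this
end
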